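/- Consider a single arc as in the context. Then the exit time function T is monotonically increasing on [0,∞): for all 0 ≤ θ₁ ≤ θ₂ one has T(θ₁) ≤ T(θ₂). -/

import Mathlib

open MeasureTheory
open scoped Classical

noncomputable section

/-- Cumulative flow `F(θ) = ∫₀^θ f` (which vanishes for `θ < 0` whenever `f`
vanishes on negatives). -/
def Fcum (f : ℝ → ℝ) (θ : ℝ) : ℝ := ∫ ξ in (0:ℝ)..θ, f ξ

/-- The queue `z(θ) = F⁺(θ − τ) − F⁻(θ)`. -/
def queueLen (τ : ℝ) (fplus fminus : ℝ → ℝ) (θ : ℝ) : ℝ :=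
  Fcum fplus (θ - τ) - Fcum fminus θ

/-- A single arc of a feasible flow over time: transit time `τ ≥ 0`, outflow
capacity `ν > 0`, inflow rate `fplus` and outflow rate `fminus` (locally integrable,
bounded, nonnegative, vanishing on negative times) with `fminus ≤ ν`, nonnegative
queues, and a lower bound `ε > 0` for the outflow rate whenever the queue is
positive (so that the waiting time is well-defined). -/
structure Arc where
  τ : ℝ
  ν : ℝ
  ε : ℝ
  fplus : ℝ → ℝ
  fminus : ℝ → ℝ
  τ_nonneg : 0 ≤ τ
  ν_pos : 0 < ν
  ε_pos : 0 < ε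
  fplus_nonneg : ∀ θ, 0 ≤ fplus θ
  fminus_nonneg : ∀ θ, 0 ≤ fminus θ
  fplus_zero_neg : ∀ θ, θ < 0 → fplus θ = 0
  fminus_zero_neg : ∀ θ, θ < 0 → fminus θ = 0
  fplus_bdd : ∃ M, ∀ θ, fplus θ ≤ M
  fplus_li : LocallyIntegrable fplus
  fminus_li : LocallyIntegrable fminus
  fminus_le_cap : ∀ θ, fminus θ ≤ ν
  queue_nonneg : ∀ θ, 0 ≤ θ → 0 ≤ queueLen τ fplus fminus θ
  outflow_lb : ∀ θ, 0 < queueLen τ fplus fminus θ → ε ≤ fminus θ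

namespace Arc

/-- Cumulative inflow `F⁺`. -/
def Fplus (A : Arc) (θ : ℝ) : ℝ := Fcum A.fplus θ

/-- Cumulative outflow `F⁻`. -/
def Fminus (A : Arc) (θ : ℝ) : ℝ := Fcum A.fminus θ

/-- The queue `z`. -/
def z (A : Arc) (θ : ℝ) : ℝ := queueLen A.τ A.fplus A.fminus θ

/-- The waiting time `q(θ)`. -/
def q (A : Arc) (θ : ℝ) : ℝ :=
  sInf {q : ℝ | 0 ≤ q ∧
    (∫ ξ in (θ + A.τ)..(θ + A.τ + q), A.fminus ξ) = A.z (θ + A.τ)}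

/-- The exit time `T(θ) = θ + τ + q(θ)`. -/
def T (A : Arc) (θ : ℝ) : ℝ := θ + A.τ + A.q θ

end Arc

end

/-!
Write `F⁺`, `F⁻` for the cumulative flows. Since `z(θ + τ) = F⁺(θ) − F⁻(θ + τ)`, the waiting time
`q(θ)` is the least `q ≥ 0` with `F⁻(θ + τ + q) = F⁺(θ)`, so `T(θ)` is the first time after
`θ + τ` at which the cumulative outflow has caught up with `F⁺(θ)`. The outflow rate is at least
`ε` while it lags behind, so such times exist. Given `θ₁ ≤ θ₂`, the continuous function `F⁻`
is at most `F⁺(θ₁)` at `θ₁ + τ` (the queue is nonnegative) and equals `F⁺(θ₂) ≥ F⁺(θ₁)` at each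
candidate `θ₂ + τ + q` for `T(θ₂)`, so it takes the value `F⁺(θ₁)` somewhere in between; hence
`T(θ₁)` is a lower bound for all these candidates, and thus for `T(θ₂)`.
-/

open Set

theorem MeasureTheory.LocallyIntegrable.intervalIntegrable {f : ℝ → ℝ}
    (hf : LocallyIntegrable f) (a b : ℝ) : IntervalIntegrable f volume a b :=
  (hf.integrableOn_isCompact isCompact_uIcc).intervalIntegrable

section Fcum

variable {f : ℝ → ℝ} (hf : LocallyIntegrable f)
include hf

theorem Fcum_sub_Fcum (a b : ℝ) : Fcum f b - Fcum f a = ∫ ξ in a..b, f ξ :=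
  intervalIntegral.integral_interval_sub_left (hf.intervalIntegrable 0 b)
    (hf.intervalIntegrable 0 a)

theorem monotone_Fcum (hf₀ : ∀ x, 0 ≤ f x) : Monotone (Fcum f) := fun a b hab => by
  have := intervalIntegral.integral_nonneg_of_forall (μ := volume) hab hf₀
  linarith [Fcum_sub_Fcum hf a b]

theorem continuous_Fcum : Continuous (Fcum f) :=
  intervalIntegral.continuous_primitive hf.intervalIntegrable 0

theorem exists_Fcum_sub_eq_of_forall_le {a c ε : ℝ} (hc : 0 ≤ c) (hε : 0 < ε)
    (hlb : ∀ t, a ≤ t → Fcum f t - Fcum f a < c → ε ≤ f t) :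
    ∃ t, a ≤ t ∧ Fcum f t - Fcum f a = c := by
  obtain ⟨t₀, hat₀, hct₀⟩ : ∃ t₀, a ≤ t₀ ∧ c ≤ Fcum f t₀ - Fcum f a := by
    by_contra! hlt
    have hs : a ≤ a + c / ε := le_add_of_nonneg_right (div_nonneg hc hε.le)
    have hint : ∫ _ in a..a + c / ε, ε ≤ ∫ ξ in a..a + c / ε, f ξ :=
      intervalIntegral.integral_mono_on hs intervalIntegrable_const (hf.intervalIntegrable _ _)
        fun x hx => hlb x hx.1 (hlt x hx.1)
    have hconst : ∫ _ in a..a + c / ε, ε = c := by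
      simp only [intervalIntegral.integral_const, smul_eq_mul, add_sub_cancel_left]
      field_simp
    have := hlt _ hs
    linarith [Fcum_sub_Fcum hf a (a + c / ε)]
  obtain ⟨t, hat, ht⟩ := intermediate_value_Icc hat₀ (continuous_Fcum hf).continuousOn
    (show Fcum f a + c ∈ Icc (Fcum f a) (Fcum f t₀) by constructor <;> linarith)
  exact ⟨t, hat.1, by linarith⟩

end Fcum

namespace Arc

variable (A : Arc)

theorem Fminus_sub_Fminus (a b : ℝ) : A.Fminus b - A.Fminus a = ∫ ξ in a..b, A.fminus ξ :=
  Fcum_sub_Fcum A.fminus_li a b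

theorem continuous_Fminus : Continuous A.Fminus := continuous_Fcum A.fminus_li

theorem monotone_Fplus : Monotone A.Fplus := monotone_Fcum A.fplus_li A.fplus_nonneg

theorem z_eq (θ : ℝ) : A.z θ = A.Fplus (θ - A.τ) - A.Fminus θ := rfl

theorem z_add_τ (θ : ℝ) : A.z (θ + A.τ) = A.Fplus θ - A.Fminus (θ + A.τ) := by
  rw [z_eq, add_sub_cancel_right]

theorem q_eq_sInf (θ : ℝ) :
    A.q θ = sInf {q : ℝ | 0 ≤ q ∧ A.Fminus (θ + A.τ + q) = A.Fplus θ} := by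
  refine congrArg sInf (ext fun q => and_congr_right fun _ => ?_)
  rw [← Fminus_sub_Fminus, z_add_τ]
  constructor <;> intro h <;> linarith

theorem exists_Fminus_eq_Fplus {θ : ℝ} (hθ : 0 ≤ θ) :
    ∃ q, 0 ≤ q ∧ A.Fminus (θ + A.τ + q) = A.Fplus θ := by
  have ha : 0 ≤ θ + A.τ := add_nonneg hθ A.τ_nonneg
  -- while the outflow lags behind `F⁺ θ`, the queue is positive
  have hlb : ∀ t, θ + A.τ ≤ t → A.Fminus t - A.Fminus (θ + A.τ) < A.z (θ + A.τ) →
      A.ε ≤ A.fminus t := fun t ht hlag => by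
    refine A.outflow_lb t (show 0 < A.z t from ?_)
    have := A.monotone_Fplus (show θ ≤ t - A.τ by linarith)
    rw [z_add_τ] at hlag
    rw [z_eq]
    linarith
  obtain ⟨t, ht, hFt⟩ : ∃ t, θ + A.τ ≤ t ∧ A.Fminus t - A.Fminus (θ + A.τ) = A.z (θ + A.τ) :=
    exists_Fcum_sub_eq_of_forall_le A.fminus_li (A.queue_nonneg _ ha) A.ε_pos hlb
  refine ⟨t - (θ + A.τ), by linarith, ?_⟩
  rw [z_add_τ] at hFt
  rw [add_sub_cancel]
  linarith

theorem T_le_of_Fplus_le_Fminus {θ t : ℝ} (hθ : 0 ≤ θ) (ht : θ + A.τ ≤ t)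
    (hF : A.Fplus θ ≤ A.Fminus t) : A.T θ ≤ t := by
  have hz : 0 ≤ A.z (θ + A.τ) := A.queue_nonneg (θ + A.τ) (add_nonneg hθ A.τ_nonneg)
  rw [z_add_τ] at hz
  obtain ⟨s, hs, hFs⟩ := intermediate_value_Icc ht A.continuous_Fminus.continuousOn
    (show A.Fplus θ ∈ Icc (A.Fminus (θ + A.τ)) (A.Fminus t) by constructor <;> linarith)
  have hq : A.q θ ≤ s - (θ + A.τ) := by
    rw [q_eq_sInf]
    refine csInf_le ⟨0, fun _ hq => hq.1⟩ ⟨by linarith [hs.1], ?_⟩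
    rw [add_sub_cancel]
    exact hFs
  rw [T]
  linarith [hs.2]

end Arc

/-- **Monotonicity of the exit time.** For a single arc of a feasible flow over
time, the exit time function `T` is monotonically increasing on `[0,∞)`. -/
theorem arc_exit_time_monotone (A : Arc) (θ₁ θ₂ : ℝ)
    (h1 : 0 ≤ θ₁) (h12 : θ₁ ≤ θ₂) :
    A.T θ₁ ≤ A.T θ₂ := by
  suffices A.T θ₁ - (θ₂ + A.τ) ≤ A.q θ₂ by unfold Arc.T at this ⊢; linarith
  rw [Arc.q_eq_sInf]
  refine le_csInf (A.exists_Fminus_eq_Fplus (h1.trans h12)) fun q ⟨hq, hFq⟩ => ?_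
  have := A.T_le_of_Fplus_le_Fminus h1 (t := θ₂ + A.τ + q) (by linarith)
    (hFq ▸ A.monotone_Fplus h12)
  linarith
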